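/- Let v₁ = (1,0), v₂ = (a,b), v₃ = (p,q) be vectors in ℝ². Then the signature of the Maslov matrix θ(v₁,v₂,v₃) is 1 if b·q·(a·q − b·p) < 0, is −1 if b·q·(a·q − b·p) > 0, and is 0 if b·q·(a·q − b·p) = 0. -/

import Mathlib

/-!
A symmetric `3 × 3` matrix of trace zero has real eigenvalues with `x + y + z = 0`. If `x y z ≠ 0`
such a triple has two entries of one sign and a lone entry of the sign of `x y z`; if `x y z = 0`
it is `(0, t, -t)`. Either way the signature is `-sign (x y z) = -sign (det)`. The Maslov matrix
has zero diagonal and determinant `2 ω(v₁,v₂) ω(v₁,v₃) ω(v₂,v₃)`, which for `v₁ = (1,0)`,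
`v₂ = (a,b)`, `v₃ = (p,q)` is `2 b q (a q - b p)`.
-/

open Matrix

/-- The standard symplectic form on `ℝ²`. -/
def omegaForm (u v : ℝ × ℝ) : ℝ := u.1 * v.2 - u.2 * v.1

/-- The signature of a real `3 × 3` matrix: the number of positive eigenvalues minus
the number of negative eigenvalues (defined to be `0` if the matrix is not symmetric). -/
noncomputable def matSignature (A : Matrix (Fin 3) (Fin 3) ℝ) : ℤ :=
  if h : A.IsHermitian then
    ((Finset.univ.filter (fun i => 0 < h.eigenvalues i)).card : ℤ)
      - ((Finset.univ.filter (fun i => h.eigenvalues i < 0)).card : ℤ)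
  else 0

/-- The Maslov matrix `θ(v₁, v₂, v₃)`. -/
def maslovMatrix (v₁ v₂ v₃ : ℝ × ℝ) : Matrix (Fin 3) (Fin 3) ℝ :=
  !![0, -omegaForm v₁ v₂, omegaForm v₁ v₃;
     -omegaForm v₁ v₂, 0, -omegaForm v₂ v₃;
     omegaForm v₁ v₃, -omegaForm v₂ v₃, 0]

open Finset

lemma card_pos_sub_card_neg_eq_sum_sign {ι α : Type*} [Fintype ι] [Zero α] [LinearOrder α]
    (f : ι → α) :
    (#{i | 0 < f i} : ℤ) - #{i | f i < 0} = ∑ i, (SignType.sign (f i) : ℤ) := by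
  simp only [card_filter, Nat.cast_sum, Nat.cast_ite, Nat.cast_one, Nat.cast_zero,
    ← sum_sub_distrib]
  refine sum_congr rfl fun i _ => ?_
  rcases lt_trichotomy (f i) 0 with h | h | h <;> simp [h, h.le]

lemma sign_add_sign_add_sign_of_add_add_eq_zero {α : Type*} [Field α] [LinearOrder α]
    [IsStrictOrderedRing α] {x y z : α} (h : x + y + z = 0) :
    (SignType.sign x : ℤ) + SignType.sign y + SignType.sign z = -SignType.sign (x * y * z) := by
  rw [sign_mul, sign_mul]
  rcases lt_trichotomy x 0 with hx | hx | hx <;>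
  rcases lt_trichotomy y 0 with hy | hy | hy <;>
  rcases lt_trichotomy z 0 with hz | hz | hz <;>
  first
  | (exfalso; linarith)
  | simp [sign_neg, sign_pos, hx, hy, hz]

lemma Matrix.IsHermitian.matSignature_eq_neg_sign_det {A : Matrix (Fin 3) (Fin 3) ℝ}
    (hA : A.IsHermitian) (htr : A.trace = 0) :
    matSignature A = -SignType.sign A.det := by
  have hsum : hA.eigenvalues 0 + hA.eigenvalues 1 + hA.eigenvalues 2 = 0 := by
    simpa [Fin.sum_univ_three, ← add_assoc] using (hA.trace_eq_sum_eigenvalues).symm.trans htr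
  rw [matSignature, dif_pos hA, card_pos_sub_card_neg_eq_sum_sign, Fin.sum_univ_three,
    sign_add_sign_add_sign_of_add_add_eq_zero hsum, hA.det_eq_prod_eigenvalues,
    Fin.prod_univ_three]
  simp

lemma maslovMatrix_isHermitian (v₁ v₂ v₃ : ℝ × ℝ) : (maslovMatrix v₁ v₂ v₃).IsHermitian := by
  ext i j
  fin_cases i <;> fin_cases j <;> simp [maslovMatrix]

lemma trace_maslovMatrix (v₁ v₂ v₃ : ℝ × ℝ) : (maslovMatrix v₁ v₂ v₃).trace = 0 := by
  simp [maslovMatrix, Matrix.trace_fin_three]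

lemma det_maslovMatrix (v₁ v₂ v₃ : ℝ × ℝ) :
    (maslovMatrix v₁ v₂ v₃).det = 2 * (omegaForm v₁ v₂ * omegaForm v₁ v₃ * omegaForm v₂ v₃) := by
  simp [maslovMatrix, Matrix.det_fin_three]
  ring

lemma matSignature_maslovMatrix (v₁ v₂ v₃ : ℝ × ℝ) :
    matSignature (maslovMatrix v₁ v₂ v₃) =
      -SignType.sign (omegaForm v₁ v₂ * omegaForm v₁ v₃ * omegaForm v₂ v₃) := by
  rw [(maslovMatrix_isHermitian v₁ v₂ v₃).matSignature_eq_neg_sign_det (trace_maslovMatrix ..),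
    det_maslovMatrix, sign_mul, sign_pos two_pos, one_mul]

theorem signature_maslov_special (a b p q : ℝ) :
    (b * q * (a * q - b * p) < 0 →
      matSignature (maslovMatrix (1, 0) (a, b) (p, q)) = 1) ∧
    (0 < b * q * (a * q - b * p) →
      matSignature (maslovMatrix (1, 0) (a, b) (p, q)) = -1) ∧
    (b * q * (a * q - b * p) = 0 →
      matSignature (maslovMatrix (1, 0) (a, b) (p, q)) = 0) := by
  have h : matSignature (maslovMatrix (1, 0) (a, b) (p, q)) =
      -SignType.sign (b * q * (a * q - b * p)) := by
    simp [matSignature_maslovMatrix, omegaForm]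
  refine ⟨fun hneg => ?_, fun hpos => ?_, fun hzero => ?_⟩ <;> rw [h]
  · simp [sign_neg hneg]
  · simp [sign_pos hpos]
  · simp [hzero]
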